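/- For every real x > 0 and every real ν > -1/2, the modified Bessel function of the first kind satisfies I_ν(x) < (1/Γ(ν+1)) · (x/2)^ν · cosh(x). -/
import Mathlib

lemma gamma_fact_ineq (ν : ℝ) (hν : -1/2 < ν) :
    ∀ m : ℕ, ((2*m).factorial : ℝ) * Real.Gamma (ν + 1) ≤ 4 ^ m * m.factorial * Real.Gamma (ν + m + 1) := by
  intro m
  induction m with
  | zero => simp
  | succ n ih =>
    have hpos : (0:ℝ) < ν + n + 1 := by
      have : (0:ℝ) ≤ (n:ℝ) := Nat.cast_nonneg n
      nlinarith
    have hG : Real.Gamma (ν + ((n+1 : ℕ):ℝ) + 1) = (ν + n + 1) * Real.Gamma (ν + n + 1) := by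
      rw [show (ν + ((n+1:ℕ):ℝ) + 1) = (ν + n + 1) + 1 by push_cast; ring]
      exact Real.Gamma_add_one (ne_of_gt hpos)
    have hGpos : 0 < Real.Gamma (ν + n + 1) := Real.Gamma_pos_of_pos hpos
    have hfact : ((2*(n+1)).factorial : ℝ) = (2*n+2) * (2*n+1) * (2*n).factorial := by
      rw [show 2*(n+1) = (2*n+1) + 1 by ring]
      push_cast [Nat.factorial_succ]
      ring
    have hkey : ((2*n:ℝ)+2) * (2*n+1) ≤ 4 * (n+1) * (ν + n + 1) := by nlinarith
    calc ((2*(n+1)).factorial : ℝ) * Real.Gamma (ν + 1)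
        = (2*n+2) * (2*n+1) * (((2*n).factorial : ℝ) * Real.Gamma (ν + 1)) := by rw [hfact]; ring
      _ ≤ (2*n+2) * (2*n+1) * (4 ^ n * n.factorial * Real.Gamma (ν + n + 1)) := by
          apply mul_le_mul_of_nonneg_left ih; positivity
      _ ≤ 4 * (n+1) * (ν + n + 1) * (4 ^ n * n.factorial * Real.Gamma (ν + n + 1)) := by
          apply mul_le_mul_of_nonneg_right hkey; positivity
      _ = 4 ^ (n+1) * (n+1).factorial * Real.Gamma (ν + ((n+1:ℕ):ℝ) + 1) := by
          rw [hG]; push_cast [Nat.factorial_succ, pow_succ]; ring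

noncomputable def besselI (ν x : ℝ) : ℝ :=
  ∑' m : ℕ, (x / 2) ^ (ν + 2 * m) / (m.factorial * Real.Gamma (ν + m + 1))

theorem besselI_lt_cosh_bound (ν x : ℝ) (hx : 0 < x) (hν : -1/2 < ν) :
    besselI ν x < 1 / Real.Gamma (ν + 1) * (x / 2) ^ ν * Real.cosh x := by
  have h2 : (0:ℝ) < x / 2 := by linarith
  set f : ℕ → ℝ := fun m => (x / 2) ^ (ν + 2 * m) / (m.factorial * Real.Gamma (ν + m + 1)) with hf
  set g : ℕ → ℝ := fun m => 1 / Real.Gamma (ν + 1) * (x / 2) ^ ν * (x ^ (2 * m) / (2 * m).factorial) with hg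
  have hGpos : ∀ m : ℕ, 0 < Real.Gamma (ν + m + 1) := by
    intro m
    apply Real.Gamma_pos_of_pos
    have : (0:ℝ) ≤ (m:ℝ) := Nat.cast_nonneg m
    nlinarith
  have hG1 : 0 < Real.Gamma (ν + 1) := by
    have := hGpos 0; simpa using this
  have hfm : ∀ m : ℕ, f m = (x / 2) ^ ν * (x / 2) ^ (2 * m) / (m.factorial * Real.Gamma (ν + m + 1)) := by
    intro m
    have : (x / 2) ^ (ν + 2 * (m:ℝ)) = (x / 2) ^ ν * (x / 2) ^ (2 * m : ℕ) := by
      rw [Real.rpow_add h2, ← Real.rpow_natCast (x/2) (2*m)]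
      push_cast
      ring_nf
    simp only [hf, this]
  have hxpow : ∀ m : ℕ, x ^ (2 * m) = 4 ^ m * (x / 2) ^ (2 * m) := by
    intro m
    rw [pow_mul, pow_mul, ← mul_pow]
    congr 1
    field_simp
    ring
  have h0 : ∀ m : ℕ, 0 ≤ f m := by
    intro m
    rw [hfm m]
    have := hGpos m
    positivity
  have hle : ∀ m : ℕ, f m ≤ g m := by
    intro m
    have hGm := hGpos m
    have hA : (0:ℝ) < (x / 2) ^ ν * (x / 2) ^ (2 * m) := by positivity
    have r : 1/((m.factorial:ℝ) * Real.Gamma (ν + m + 1))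
        ≤ 4^m/(((2*m).factorial:ℝ) * Real.Gamma (ν + 1)) := by
      rw [div_le_div_iff₀ (by positivity) (by positivity)]
      nlinarith [gamma_fact_ineq ν hν m]
    calc f m = (x / 2) ^ ν * (x / 2) ^ (2 * m) * (1/((m.factorial:ℝ) * Real.Gamma (ν + m + 1))) := by
          rw [hfm m]; ring
      _ ≤ (x / 2) ^ ν * (x / 2) ^ (2 * m) * (4^m/(((2*m).factorial:ℝ) * Real.Gamma (ν + 1))) :=
          mul_le_mul_of_nonneg_left r hA.le
      _ = g m := by
          rw [hg]; simp only; rw [hxpow m]; field_simp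
  have hi : f 1 < g 1 := by
    have hGm := hGpos 1
    have hA : (0:ℝ) < (x / 2) ^ ν * (x / 2) ^ (2 * 1) := by positivity
    have hG2 : Real.Gamma (ν + (1:ℕ) + 1) = (ν + 1) * Real.Gamma (ν + 1) := by
      rw [show (ν + ((1:ℕ):ℝ) + 1) = (ν + 1) + 1 by push_cast; ring]
      exact Real.Gamma_add_one (by nlinarith)
    have r : 1/(((1:ℕ).factorial:ℝ) * Real.Gamma (ν + (1:ℕ) + 1))
        < (4:ℝ)^(1:ℕ)/(((2*1:ℕ).factorial:ℝ) * Real.Gamma (ν + 1)) := by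
      rw [div_lt_div_iff₀ (by positivity) (by positivity), hG2]
      norm_num
      nlinarith
    calc f 1 = (x / 2) ^ ν * (x / 2) ^ (2 * 1) * (1/(((1:ℕ).factorial:ℝ) * Real.Gamma (ν + (1:ℕ) + 1))) := by
          rw [hfm 1]; ring
      _ < (x / 2) ^ ν * (x / 2) ^ (2 * 1) * ((4:ℝ)^(1:ℕ)/(((2*1:ℕ).factorial:ℝ) * Real.Gamma (ν + 1))) := by
          exact mul_lt_mul_of_pos_left r hA
      _ = g 1 := by
          rw [hg]; simp only; rw [hxpow 1]; field_simp
  have hgsum : Summable g := by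
    have : Summable (fun m : ℕ => x ^ (2 * m) / (2 * m).factorial) := (Real.hasSum_cosh x).summable
    simpa [hg, mul_div_assoc] using this.mul_left (1 / Real.Gamma (ν + 1) * (x / 2) ^ ν)
  have hlt : ∑' m, f m < ∑' m, g m := Summable.tsum_lt_tsum_of_nonneg h0 hle hi hgsum
  have hrhs : ∑' m, g m = 1 / Real.Gamma (ν + 1) * (x / 2) ^ ν * Real.cosh x := by
    rw [Real.cosh_eq_tsum, ← tsum_mul_left]
  rw [besselI]
  rw [hrhs] at hlt
  exact hlt
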